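/- arXiv:1310.6019 — 4 statements merged into one kernel-verified Lean document; each statement's English description precedes it below -/
import Mathlib

section
/- Let p, m, i_p, i_e be natural numbers with i_e ≤ i_p ≤ p, i_e ≤ m, m − i_e ≤ p − i_p, and i_e > 0. Then S(p, m, i_p − 1, i_e) < S(p, m, i_p, i_e). -/
/-! Marking one more of the `p` elements raises the number of `m`-draws with more than `e`
marked elements by exactly `C(a, e) C(q, m-e-1)` (`a` old marks, `q` unmarked elements left):
these are the draws that contain the newly marked element and exactly `e` old marks.
As an identity of tail sums this follows from Pascal's rule by peeling off the smallest term
of the tail. -/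

/-- The surprise value `S(p, m, i_p, i_e)`. -/
def surpriseVal (p m ip ie : ℕ) : ℚ :=
  (∑ i ∈ Finset.Icc ie m, (ip.choose i * (p - ip).choose (m - i) : ℚ)) / (p.choose m)

open Finset

theorem sum_Icc_choose_succ_mul_choose (a q e m : ℕ) (h : e < m) :
    ∑ i ∈ Icc (e + 1) m, (a + 1).choose i * q.choose (m - i) =
      ∑ i ∈ Icc (e + 1) m, a.choose i * (q + 1).choose (m - i) +
        a.choose e * q.choose (m - (e + 1)) := by
  obtain ⟨d, rfl⟩ : ∃ d, m = e + 1 + d := ⟨m - (e + 1), by omega⟩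
  induction d generalizing e with
  | zero => simp [Nat.choose_succ_succ, add_comm]
  | succ d ih =>
    have hm : e + 1 + (d + 1) = e + 1 + 1 + d := by ring
    have hq : e + 1 + 1 + d - (e + 1) = (e + 1 + 1 + d - (e + 1 + 1)) + 1 := by omega
    rw [hm, ← insert_Icc_add_one_left_eq_Icc (by omega), sum_insert (by simp),
      sum_insert (by simp), ih (e + 1) (by omega), hq,
      Nat.choose_succ_succ a e, Nat.choose_succ_succ q]
    ring

theorem surpriseVal_succ (p m a e : ℕ) (ha : a < p) (he : e < m) :
    surpriseVal p m (a + 1) (e + 1) = surpriseVal p m a (e + 1) +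
      a.choose e * (p - (a + 1)).choose (m - (e + 1)) / p.choose m := by
  have hp : p - a = p - (a + 1) + 1 := by omega
  rw [surpriseVal, surpriseVal, hp, ← add_div]
  congr 1
  exact_mod_cast sum_Icc_choose_succ_mul_choose a (p - (a + 1)) e m he

theorem stmt1 (p m ip ie : ℕ) (h1 : ie ≤ ip) (h2 : ip ≤ p) (h3 : ie ≤ m)
    (h4 : m - ie ≤ p - ip) (h5 : 0 < ie) :
    surpriseVal p m (ip - 1) ie < surpriseVal p m ip ie := by
  obtain ⟨e, rfl⟩ : ∃ e, ie = e + 1 := ⟨ie - 1, by omega⟩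
  obtain ⟨a, rfl⟩ : ∃ a, ip = a + 1 := ⟨ip - 1, by omega⟩
  rw [Nat.add_sub_cancel, surpriseVal_succ p m a e (by omega) (by omega)]
  have hpm : 0 < p.choose m := Nat.choose_pos (by omega)
  have hae : 0 < a.choose e := Nat.choose_pos (by omega)
  have hq : 0 < (p - (a + 1)).choose (m - (e + 1)) := Nat.choose_pos (by omega)
  apply lt_add_of_pos_right
  positivity
end

section
/- Let p, m, i_p, i_e be natural numbers with i_e ≤ i_p ≤ p, i_e ≤ m, m − i_e ≤ p − i_p, and p − i_p > m − i_e. Then S(p, m, i_p + 1, i_e + 1) < S(p, m, i_p, i_e). -/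
open Finset

lemma sum_Icc_eq_add_sum_Icc_succ {M : Type*} [AddCommMonoid M] (f : ℕ → M) {a b : ℕ}
    (h : a ≤ b) : ∑ i ∈ Icc a b, f i = f a + ∑ i ∈ Icc (a + 1) b, f i := by
  rw [Icc_eq_cons_Ioc h, sum_cons, Icc_add_one_left_eq_Ioc]

lemma sum_Icc_choose_mul_choose_succ (a q e m : ℕ) (h : e ≤ m) :
    ∑ i ∈ Icc e m, a.choose i * (q + 1).choose (m - i)
      = ∑ i ∈ Icc (e + 1) m, (a + 1).choose i * q.choose (m - i)
        + a.choose e * q.choose (m - e) := by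
  obtain ⟨d, rfl⟩ := Nat.exists_eq_add_of_le h
  induction d generalizing e with
  | zero => simp
  | succ d ih =>
    have hd : e + (d + 1) = e + 1 + d := by omega
    rw [sum_Icc_eq_add_sum_Icc_succ _ h, hd, ih (e + 1) (by omega),
      sum_Icc_eq_add_sum_Icc_succ (fun i ↦ (a + 1).choose i * q.choose (e + 1 + d - i))
        (by omega : e + 1 ≤ e + 1 + d),
      show e + 1 + d - e = d + 1 by omega, Nat.add_sub_cancel_left,
      Nat.choose_succ_succ q d, Nat.choose_succ_succ a e]
    ring

lemma surpriseVal_eq_surpriseVal_succ_succ_add {p m ip ie : ℕ} (hip : ip < p) (hie : ie ≤ m) :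
    surpriseVal p m ip ie = surpriseVal p m (ip + 1) (ie + 1)
      + ip.choose ie * (p - ip - 1).choose (m - ie) / p.choose m := by
  have hq : p - ip = p - ip - 1 + 1 := by omega
  rw [surpriseVal, surpriseVal, ← add_div, show p - (ip + 1) = p - ip - 1 by omega, hq]
  exact_mod_cast congrArg (fun n : ℕ ↦ (n : ℚ) / p.choose m)
    (sum_Icc_choose_mul_choose_succ ip (p - ip - 1) ie m hie)

theorem stmt2_general (p m ip ie : ℕ) (h1 : ie ≤ ip) (h3 : ie ≤ m)
    (h5 : m - ie < p - ip) :
    surpriseVal p m (ip + 1) (ie + 1) < surpriseVal p m ip ie := by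
  rw [surpriseVal_eq_surpriseVal_succ_succ_add (by omega) h3, lt_add_iff_pos_right]
  have := Nat.choose_pos h1
  have := Nat.choose_pos (show m - ie ≤ p - ip - 1 by omega)
  have := Nat.choose_pos (show m ≤ p by omega)
  positivity

theorem stmt2 (p m ip ie : ℕ) (h1 : ie ≤ ip) (h2 : ip ≤ p) (h3 : ie ≤ m)
    (h4 : m - ie ≤ p - ip) (h5 : m - ie < p - ip) :
    surpriseVal p m (ip + 1) (ie + 1) < surpriseVal p m ip ie :=
  stmt2_general p m ip ie h1 h3 h5
end

section
/- Let G be a finite simple graph that has at least one edge and is not a complete graph, and let ζ be a surprise-optimal clustering of G. Then ζ is Pareto-optimal with respect to maximizing the number of intracluster edges and minimizing the number of intracluster vertex pairs: every clustering ζ' of G with i_e(ζ') ≥ i_e(ζ) and i_p(ζ') ≤ i_p(ζ) satisfies i_e(ζ') = i_e(ζ) and i_p(ζ') = i_p(ζ). -/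
/-!
Write the surprise as `T(i_p, i_e) / C(p, m)` with `T(k, t) = ∑_{i ≥ t} C(k, i) C(p - k, m - i)`,
the upper tail of Vandermonde's convolution. `T` decreases strictly in `t` while the term
`C(k, t) C(p - k, m - t)` is nonzero, and increases in `k` by
`T(k + 1, t + 1) - T(k, t + 1) = C(k, t) C(p - k - 1, m - t - 1)`, strictly once `t ≥ 1`.
Hence a clustering that dominates `ζ` in both counts without matching it has strictly smaller
surprise, provided `i_e(ζ) ≥ 1`. That holds for an optimal `ζ`: otherwise `S(ζ) = 1`, whereas
the clustering whose only nontrivial cluster is an edge has surprise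
`C(p - 1, m - 1) / C(p, m) < 1`, as `0 < m < p` for a nonempty, non-complete graph.
-/

open Finset

variable {V : Type*} [Fintype V] [DecidableEq V]

open scoped Classical in
/-- The number of edges of `G`. -/
noncomputable def numEdges (G : SimpleGraph V) : ℕ := G.edgeFinset.card

open scoped Classical in
/-- The number of intracluster edges of the clustering `ζ`, i.e. of edges of `G`
having both endpoints in the same cluster. -/
noncomputable def intraEdges (G : SimpleGraph V) (ζ : Finpartition (univ : Finset V)) : ℕ :=
  (G.edgeFinset.filter fun e => ∃ P ∈ ζ.parts, ∀ v ∈ e, v ∈ P).card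

open scoped Classical in
/-- The number of intercluster edges of the clustering `ζ`, i.e. of edges of `G`
whose endpoints lie in different clusters. -/
noncomputable def interEdges (G : SimpleGraph V) (ζ : Finpartition (univ : Finset V)) : ℕ :=
  (G.edgeFinset.filter fun e => ¬ ∃ P ∈ ζ.parts, ∀ v ∈ e, v ∈ P).card

/-- The number of intracluster vertex pairs of the clustering `ζ`. -/
def intraPairs (ζ : Finpartition (univ : Finset V)) : ℕ :=
  ∑ P ∈ ζ.parts, (P.card).choose 2

/-- The surprise of the clustering `ζ` of the graph `G`. -/
noncomputable def surprise (G : SimpleGraph V) (ζ : Finpartition (univ : Finset V)) : ℚ :=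
  surpriseVal ((Fintype.card V).choose 2) (numEdges G) (intraPairs ζ) (intraEdges G ζ)

def vandermondeTail (m k q t : ℕ) : ℕ := ∑ i ∈ Icc t m, k.choose i * q.choose (m - i)

namespace vandermondeTail

variable {m k q t : ℕ}

theorem zero_eq_choose (m k q : ℕ) : vandermondeTail m k q 0 = (k + q).choose m := by
  rw [Nat.add_choose_eq, Nat.sum_antidiagonal_eq_sum_range_succ_mk, vandermondeTail,
    Nat.range_succ_eq_Icc_zero]

theorem eq_zero_of_lt (h : m < t) : vandermondeTail m k q t = 0 := by
  rw [vandermondeTail, Icc_eq_empty_of_lt h, sum_empty]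

theorem eq_add_succ (h : t ≤ m) :
    vandermondeTail m k q t = k.choose t * q.choose (m - t) + vandermondeTail m k q (t + 1) := by
  rw [vandermondeTail, ← insert_Icc_add_one_left_eq_Icc h, sum_insert (by simp), vandermondeTail]

theorem antitone : Antitone (vandermondeTail m k q) := fun _ _ h =>
  sum_le_sum_of_subset (Icc_subset_Icc_left h)

theorem succ_lt (htk : t ≤ k) (htm : t ≤ m) (hmq : m - t ≤ q) :
    vandermondeTail m k q (t + 1) < vandermondeTail m k q t := by
  rw [eq_add_succ htm (k := k) (q := q)]
  have := Nat.mul_pos (Nat.choose_pos htk) (Nat.choose_pos hmq)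
  omega

theorem succ_left_succ (h : t + 1 ≤ m) :
    vandermondeTail m (k + 1) q (t + 1)
      = vandermondeTail m k (q + 1) (t + 1) + k.choose t * q.choose (m - (t + 1)) := by
  obtain ⟨d, rfl⟩ := Nat.exists_eq_add_of_le h
  induction d generalizing t with
  | zero =>
    simp only [Nat.add_zero, eq_add_succ le_rfl, eq_zero_of_lt (Nat.lt_succ_self _),
      Nat.sub_self, Nat.choose_zero_right, Nat.choose_succ_succ]
    ring
  | succ d ih =>
    have hd : t + 1 + (d + 1) = t + 1 + 1 + d := by omega
    rw [eq_add_succ (by omega), eq_add_succ (k := k) (by omega), hd, ih (by omega),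
      show t + 1 + 1 + d - (t + 1) = d + 1 by omega, show t + 1 + 1 + d - (t + 1 + 1) = d by omega,
      Nat.choose_succ_succ k t, Nat.choose_succ_succ q d]
    ring

theorem le_succ_left : vandermondeTail m k (q + 1) t ≤ vandermondeTail m (k + 1) q t := by
  rcases t with _ | t
  · rw [zero_eq_choose, zero_eq_choose, Nat.add_right_comm, Nat.add_assoc]
  · by_cases h : t + 1 ≤ m
    · rw [succ_left_succ h]; omega
    · rw [eq_zero_of_lt (by omega), eq_zero_of_lt (by omega)]

theorem lt_succ_left (htk : t ≤ k) (htm : t + 1 ≤ m) (hmq : m - (t + 1) ≤ q) :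
    vandermondeTail m k (q + 1) (t + 1) < vandermondeTail m (k + 1) q (t + 1) := by
  rw [succ_left_succ htm]
  have := Nat.mul_pos (Nat.choose_pos htk) (Nat.choose_pos hmq)
  omega

theorem mono_left {p a b : ℕ} (hab : a ≤ b) (hbp : b ≤ p) :
    vandermondeTail m a (p - a) t ≤ vandermondeTail m b (p - b) t := by
  induction b, hab using Nat.le_induction with
  | base => rfl
  | succ b _ ih =>
    calc vandermondeTail m a (p - a) t ≤ vandermondeTail m b (p - (b + 1) + 1) t := by
          rw [show p - (b + 1) + 1 = p - b by omega]; exact ih (by omega)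
      _ ≤ vandermondeTail m (b + 1) (p - (b + 1)) t := le_succ_left

theorem lt_of_le_of_le_of_lt_or_lt {p k' t' : ℕ} (hkp : k ≤ p) (htk : t ≤ k) (htm : t ≤ m)
    (hmt : m - t ≤ p - k) (ht : 0 < t) (hk : k' ≤ k) (ht' : t ≤ t') (hne : k' < k ∨ t < t') :
    vandermondeTail m k' (p - k') t' < vandermondeTail m k (p - k) t := by
  rcases hne with hk' | ht''
  · obtain ⟨j, rfl⟩ : ∃ j, k = j + 1 := ⟨k - 1, by omega⟩
    obtain ⟨s, rfl⟩ : ∃ s, t = s + 1 := ⟨t - 1, by omega⟩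
    calc vandermondeTail m k' (p - k') t' ≤ vandermondeTail m k' (p - k') (s + 1) := antitone ht'
      _ ≤ vandermondeTail m j (p - (j + 1) + 1) (s + 1) := by
          rw [show p - (j + 1) + 1 = p - j by omega]; exact mono_left (by omega) (by omega)
      _ < vandermondeTail m (j + 1) (p - (j + 1)) (s + 1) :=
          lt_succ_left (by omega) htm (by omega)
  · calc vandermondeTail m k' (p - k') t' ≤ vandermondeTail m k (p - k) t' := mono_left hk hkp
      _ ≤ vandermondeTail m k (p - k) (t + 1) := antitone ht''
      _ < vandermondeTail m k (p - k) t := succ_lt htk htm hmt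

end vandermondeTail

theorem surpriseVal_eq (p m k t : ℕ) :
    surpriseVal p m k t = (vandermondeTail m k (p - k) t : ℚ) / p.choose m := by
  rw [surpriseVal, vandermondeTail]
  push_cast
  rfl

theorem surpriseVal_lt_surpriseVal {p m k k' t t' : ℕ} (hmp : m ≤ p)
    (h : vandermondeTail m k' (p - k') t' < vandermondeTail m k (p - k) t) :
    surpriseVal p m k' t' < surpriseVal p m k t := by
  rw [surpriseVal_eq, surpriseVal_eq]
  gcongr
  exact_mod_cast Nat.choose_pos hmp

theorem surpriseVal_zero {p m k : ℕ} (hkp : k ≤ p) (hmp : m ≤ p) : surpriseVal p m k 0 = 1 := by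
  rw [surpriseVal_eq, vandermondeTail.zero_eq_choose, Nat.add_sub_cancel' hkp]
  exact div_self (by exact_mod_cast (Nat.choose_pos hmp).ne')

theorem surpriseVal_one_one_lt_one {p m : ℕ} (hm : 0 < m) (hmp : m < p) :
    surpriseVal p m 1 1 < 1 := by
  rw [← surpriseVal_zero (k := 1) (by omega) hmp.le]
  exact surpriseVal_lt_surpriseVal hmp.le
    (vandermondeTail.succ_lt (Nat.zero_le _) (Nat.zero_le _) (by omega))

open scoped Classical

def intraPairFinset (ζ : Finpartition (univ : Finset V)) : Finset (Sym2 V) :=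
  ζ.parts.biUnion fun P => P.offDiag.image Sym2.mk.uncurry

theorem Finset.mem_image_offDiag_iff {α : Type*} [DecidableEq α] {P : Finset α} {e : Sym2 α} :
    e ∈ P.offDiag.image Sym2.mk.uncurry ↔ ¬ e.IsDiag ∧ ∀ v ∈ e, v ∈ P := by
  rw [← Sym2.filter_image_mk_not_isDiag, mem_filter, ← sym2_eq_image, mem_sym2_iff, and_comm]

theorem mem_intraPairFinset {ζ : Finpartition (univ : Finset V)} {e : Sym2 V} :
    e ∈ intraPairFinset ζ ↔ ¬ e.IsDiag ∧ ∃ P ∈ ζ.parts, ∀ v ∈ e, v ∈ P := by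
  simp only [intraPairFinset, mem_biUnion, mem_image_offDiag_iff]
  tauto

theorem mk_mem_intraPairFinset {ζ : Finpartition (univ : Finset V)} {a b : V} :
    s(a, b) ∈ intraPairFinset ζ ↔ a ≠ b ∧ a ∈ ζ.part b := by
  simp [mem_intraPairFinset, Finpartition.mem_part_iff_exists]

theorem card_intraPairFinset (ζ : Finpartition (univ : Finset V)) :
    #(intraPairFinset ζ) = intraPairs ζ := by
  rw [intraPairFinset, card_biUnion, intraPairs]
  · exact sum_congr rfl fun P _ => Sym2.card_image_offDiag P
  · intro P hP Q hQ hPQ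
    refine disjoint_left.mpr fun e heP heQ => ?_
    induction e using Sym2.ind with | _ a b =>
    exact disjoint_left.mp (ζ.disjoint hP hQ hPQ) ((mem_image_offDiag_iff.mp heP).2 a (by simp))
      ((mem_image_offDiag_iff.mp heQ).2 a (by simp))

theorem intraEdges_eq_card_inter (G : SimpleGraph V) (ζ : Finpartition (univ : Finset V)) :
    intraEdges G ζ = #(G.edgeFinset ∩ intraPairFinset ζ) := by
  rw [intraEdges, ← filter_mem_eq_inter]
  congr 1
  refine filter_congr fun e he => ?_
  rw [mem_intraPairFinset, and_iff_right (G.not_isDiag_of_mem_edgeFinset he)]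

theorem intraPairFinset_subset_edgeFinset_top (ζ : Finpartition (univ : Finset V)) :
    intraPairFinset ζ ⊆ (⊤ : SimpleGraph V).edgeFinset := fun e he => by
  simpa using (mem_intraPairFinset.mp he).1

theorem intraPairs_le (ζ : Finpartition (univ : Finset V)) :
    intraPairs ζ ≤ (Fintype.card V).choose 2 := by
  rw [← card_intraPairFinset, ← SimpleGraph.card_edgeFinset_top_eq_card_choose_two]
  exact card_le_card (intraPairFinset_subset_edgeFinset_top ζ)

theorem intraEdges_le_intraPairs (G : SimpleGraph V) (ζ : Finpartition (univ : Finset V)) :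
    intraEdges G ζ ≤ intraPairs ζ := by
  rw [intraEdges_eq_card_inter, ← card_intraPairFinset]
  exact card_le_card inter_subset_right

theorem intraEdges_le_numEdges (G : SimpleGraph V) (ζ : Finpartition (univ : Finset V)) :
    intraEdges G ζ ≤ numEdges G := by
  rw [intraEdges_eq_card_inter, numEdges]
  exact card_le_card inter_subset_left

theorem numEdges_sub_intraEdges_le (G : SimpleGraph V) (ζ : Finpartition (univ : Finset V)) :
    numEdges G - intraEdges G ζ ≤ (Fintype.card V).choose 2 - intraPairs ζ := by
  rw [intraEdges_eq_card_inter, numEdges, ← card_intraPairFinset,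
    ← SimpleGraph.card_edgeFinset_top_eq_card_choose_two, inter_comm, ← card_sdiff,
    ← card_sdiff_of_subset (intraPairFinset_subset_edgeFinset_top ζ)]
  exact card_le_card (sdiff_subset_sdiff (G.edgeFinset_mono le_top) le_rfl)

theorem exists_intraPairFinset_eq_singleton {u v : V} (huv : u ≠ v) :
    ∃ ζ : Finpartition (univ : Finset V), intraPairFinset ζ = {s(u, v)} := by
  -- the kernel of `update id v u` identifies `u` with `v` and nothing else
  refine ⟨Finpartition.ofSetoid (Setoid.ker (Function.update id v u)), ?_⟩
  ext e
  induction e using Sym2.ind with | _ a b =>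
  rw [mk_mem_intraPairFinset, Finpartition.mem_part_ofSetoid_iff_rel, Setoid.ker_def,
    mem_singleton, Sym2.eq_iff]
  simp only [Function.update_apply, id]
  grind

theorem exists_intraPairs_eq_one_intraEdges_eq_one {G : SimpleGraph V} {u v : V}
    (huv : G.Adj u v) :
    ∃ ζ : Finpartition (univ : Finset V), intraPairs ζ = 1 ∧ intraEdges G ζ = 1 := by
  obtain ⟨ζ, hζ⟩ := exists_intraPairFinset_eq_singleton huv.ne
  refine ⟨ζ, by rw [← card_intraPairFinset, hζ, card_singleton], ?_⟩
  rw [intraEdges_eq_card_inter, hζ, inter_singleton_of_mem (by simpa using huv), card_singleton]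

/-- A surprise-optimal clustering of a graph with at least one edge that is not complete
is Pareto-optimal with respect to maximizing intracluster edges and minimizing
intracluster vertex pairs. -/
theorem stmt6 (G : SimpleGraph V) (hE : G.edgeSet.Nonempty) (hnc : G ≠ ⊤)
    (ζ : Finpartition (univ : Finset V))
    (hopt : ∀ ζ' : Finpartition (univ : Finset V), surprise G ζ ≤ surprise G ζ')
    (ζ' : Finpartition (univ : Finset V))
    (he : intraEdges G ζ ≤ intraEdges G ζ') (hp : intraPairs ζ' ≤ intraPairs ζ) :
    intraEdges G ζ' = intraEdges G ζ ∧ intraPairs ζ' = intraPairs ζ := by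
  obtain ⟨e, heG⟩ := hE
  obtain ⟨u, v, huv⟩ : ∃ u v, G.Adj u v := by
    induction e using Sym2.ind with | _ u v => exact ⟨u, v, heG⟩
  have hm : 0 < numEdges G := card_pos.mpr ⟨s(u, v), by simpa using huv⟩
  have hmp : numEdges G < (Fintype.card V).choose 2 := by
    rw [numEdges, ← SimpleGraph.card_edgeFinset_top_eq_card_choose_two]
    exact card_lt_card (SimpleGraph.edgeFinset_ssubset_edgeFinset.mpr hnc.lt_top)
  have hie : 0 < intraEdges G ζ := by
    by_contra! h0
    obtain ⟨ζ₁, hp₁, he₁⟩ := exists_intraPairs_eq_one_intraEdges_eq_one huv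
    have := hopt ζ₁
    rw [surprise, surprise, hp₁, he₁, Nat.le_zero.mp h0,
      surpriseVal_zero (intraPairs_le ζ) hmp.le] at this
    exact (surpriseVal_one_one_lt_one hm hmp).not_ge this
  by_contra hne
  refine (hopt ζ').not_gt (surpriseVal_lt_surpriseVal hmp.le
    (vandermondeTail.lt_of_le_of_le_of_lt_or_lt (intraPairs_le ζ) (intraEdges_le_intraPairs G ζ)
      (intraEdges_le_numEdges G ζ) (numEdges_sub_intraEdges_le G ζ) hie hp he (by omega)))
end

section
/- Let u₁, u₂, k₁, k₂ ∈ ℕ with u₁ > k₁, u₂ > k₂ and k₁ > k₂, and let f₁, f₂, g₁, g₂ : ℕ → ℕ be functions with f₁(n) ∈ Θ(n^{u₁}), f₂(n) ∈ Θ(n^{u₂}), g₁(n) ∈ Θ(n^{k₁}) and g₂(n) ∈ Θ(n^{k₂}) (as real-valued sequences, for n → ∞). Then C(f₂(n), g₂(n)) ∈ o(C(f₁(n), g₁(n))). -/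
/-!
Put `t = δ n` with `δ = c / C`, where `c n^{u₁} ≤ f₁(n)` and `g₁(n) ≤ C n^{k₁}`; since `u₁ > k₁`,
eventually `t · g₁ ≤ f₁`, hence `C(f₁, g₁) ≥ (f₁ / g₁)^{g₁} ≥ t^{g₁}`. On the other side
`f₂ ≤ t^{u₂+1}` eventually, so `C(f₂, g₂) ≤ f₂^{g₂} ≤ t^{(u₂+1) g₂}`, and `k₂ < k₁` makes
`(u₂+1) g₂ < g₁` eventually. The quotient is then at most `1 / t → 0`.
-/

open Filter

/-- A sequence `h` of naturals is `Θ(n^u)`: there are constants `0 < c₁ ≤ c₂` and a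
threshold `N` with `c₁ · n^u ≤ h(n) ≤ c₂ · n^u` for all `n ≥ N`. -/
def IsBigTheta (h : ℕ → ℕ) (u : ℕ) : Prop :=
  ∃ c₁ c₂ : ℝ, 0 < c₁ ∧ c₁ ≤ c₂ ∧ ∃ N : ℕ, ∀ n ≥ N,
    c₁ * (n : ℝ) ^ u ≤ (h n : ℝ) ∧ (h n : ℝ) ≤ c₂ * (n : ℝ) ^ u

namespace Nat

variable {α : Type*} [Field α] [LinearOrder α] [IsStrictOrderedRing α]

theorem div_pow_le_choose {n k : ℕ} (h : k ≤ n) : ((n : α) / k) ^ k ≤ n.choose k := by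
  induction k generalizing n with
  | zero => simp
  | succ k ih =>
    obtain ⟨m, rfl⟩ : ∃ m, n = m + 1 := ⟨n - 1, by omega⟩
    set q : α := ((m + 1 : ℕ) : α) / (k + 1 : ℕ)
    have hq_pow : q ^ k ≤ ((m : α) / k) ^ k := by
      rcases k.eq_zero_or_pos with rfl | hk
      · simp
      -- `(m + 1) / (k + 1) ≤ m / k` is equivalent to `k ≤ m`
      have hkm : (k : α) ≤ m := by exact_mod_cast (by omega : k ≤ m)
      refine pow_le_pow_left₀ (by positivity) ?_ k
      rw [div_le_div_iff₀ (by positivity) (by exact_mod_cast hk)]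
      push_cast
      linarith
    have hchoose : ((m + 1).choose (k + 1) : α) = q * m.choose k := by
      rw [div_mul_eq_mul_div, eq_div_iff (by positivity)]
      exact_mod_cast (m.add_one_mul_choose_eq k).symm
    calc q ^ (k + 1) = q * q ^ k := _root_.pow_succ' q k
      _ ≤ q * m.choose k := by gcongr; exact hq_pow.trans (ih (by omega))
      _ = _ := hchoose.symm

theorem pow_le_choose_of_mul_le {t : α} {n k : ℕ} (ht : 1 ≤ t) (h : t * k ≤ n) :
    t ^ k ≤ n.choose k := by
  have hkn : k ≤ n := by exact_mod_cast (le_mul_of_one_le_left k.cast_nonneg ht).trans h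
  rcases k.eq_zero_or_pos with rfl | hk
  · simp
  have hk' : (0 : α) < k := by exact_mod_cast hk
  exact (pow_le_pow_left₀ (by positivity) ((le_div_iff₀ hk').2 h) k).trans
    (div_pow_le_choose hkn)

end Nat

theorem choose_div_choose_le_inv {a b c d m : ℕ} {t : ℝ} (ht : 1 ≤ t) (hab : t * b ≤ a)
    (hc : (c : ℝ) ≤ t ^ m) (hmd : m * d < b) :
    (c.choose d : ℝ) / a.choose b ≤ t⁻¹ := by
  have hden : t ^ b ≤ a.choose b := Nat.pow_le_choose_of_mul_le ht hab
  have hnum : (c.choose d : ℝ) ≤ t ^ (b - 1) :=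
    calc (c.choose d : ℝ) ≤ (c : ℝ) ^ d := by exact_mod_cast c.choose_le_pow d
      _ ≤ (t ^ m) ^ d := by gcongr
      _ = t ^ (m * d) := (pow_mul t m d).symm
      _ ≤ t ^ (b - 1) := pow_le_pow_right₀ ht (by omega)
  have htb : t ^ b = t ^ (b - 1) * t := by rw [← pow_succ]; congr 1; omega
  have ht0 : 0 < t := by linarith
  calc (c.choose d : ℝ) / a.choose b ≤ t ^ (b - 1) / t ^ b :=
        div_le_div₀ (by positivity) hnum (by positivity) hden
    _ = t⁻¹ := by rw [htb]; field_simp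

theorem eventually_mul_pow_lt_mul_pow (C : ℝ) {b : ℝ} (hb : 0 < b) {k l : ℕ} (hkl : k < l) :
    ∀ᶠ n : ℕ in atTop, C * (n : ℝ) ^ k < b * (n : ℝ) ^ l := by
  filter_upwards [(tendsto_natCast_atTop_atTop (R := ℝ)).eventually_gt_atTop (|C| / b),
    eventually_ge_atTop 1] with n hn hn1
  have hn1 : (1 : ℝ) ≤ n := by exact_mod_cast hn1
  calc C * (n : ℝ) ^ k ≤ |C| * (n : ℝ) ^ k := by gcongr; exact le_abs_self C
    _ < b * n * (n : ℝ) ^ k := by gcongr; exact (div_lt_iff₀' hb).1 hn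
    _ = b * (n : ℝ) ^ (k + 1) := by ring
    _ ≤ b * (n : ℝ) ^ l := mul_le_mul_of_nonneg_left (pow_le_pow_right₀ hn1 hkl) hb.le

namespace IsBigTheta

variable {f g : ℕ → ℕ} {u k : ℕ}

theorem exists_eventually_mul_pow_le (hf : IsBigTheta f u) :
    ∃ c : ℝ, 0 < c ∧ ∀ᶠ n : ℕ in atTop, c * (n : ℝ) ^ u ≤ f n := by
  obtain ⟨c₁, _, hc₁, -, N, hN⟩ := hf
  exact ⟨c₁, hc₁, eventually_atTop.2 ⟨N, fun n hn => (hN n hn).1⟩⟩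

theorem exists_eventually_le_mul_pow (hf : IsBigTheta f u) :
    ∃ C : ℝ, 0 < C ∧ ∀ᶠ n : ℕ in atTop, (f n : ℝ) ≤ C * (n : ℝ) ^ u := by
  obtain ⟨c₁, c₂, hc₁, hc₁₂, N, hN⟩ := hf
  exact ⟨c₂, hc₁.trans_le hc₁₂, eventually_atTop.2 ⟨N, fun n hn => (hN n hn).2⟩⟩

theorem exists_eventually_mul_le (hf : IsBigTheta f u) (hg : IsBigTheta g k) (hku : k < u) :
    ∃ δ : ℝ, 0 < δ ∧ ∀ᶠ n : ℕ in atTop, δ * n * g n ≤ f n := by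
  obtain ⟨a, ha, hf_ge⟩ := hf.exists_eventually_mul_pow_le
  obtain ⟨B, hB, hg_le⟩ := hg.exists_eventually_le_mul_pow
  refine ⟨a / B, by positivity, ?_⟩
  filter_upwards [eventually_ge_atTop 1, hf_ge, hg_le] with n hn1 hfn hgn
  have hn1 : (1 : ℝ) ≤ n := by exact_mod_cast hn1
  calc a / B * n * g n ≤ a / B * n * (B * (n : ℝ) ^ k) := by gcongr
    _ = a * (n : ℝ) ^ (k + 1) := by field_simp; ring
    _ ≤ a * (n : ℝ) ^ u := mul_le_mul_of_nonneg_left (pow_le_pow_right₀ hn1 hku) ha.le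
    _ ≤ f n := hfn

theorem eventually_le_mul_pow_succ (hf : IsBigTheta f u) {δ : ℝ} (hδ : 0 < δ) :
    ∀ᶠ n : ℕ in atTop, (f n : ℝ) ≤ (δ * n) ^ (u + 1) := by
  obtain ⟨A, -, hf_le⟩ := hf.exists_eventually_le_mul_pow
  filter_upwards [hf_le, eventually_mul_pow_lt_mul_pow A (pow_pos hδ (u + 1)) u.lt_succ_self]
    with n hfn hAn
  rw [mul_pow]
  exact hfn.trans hAn.le

theorem eventually_mul_lt (hg : IsBigTheta g k) (hf : IsBigTheta f u) (hku : k < u) (m : ℕ) :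
    ∀ᶠ n in atTop, m * g n < f n := by
  obtain ⟨B, -, hg_le⟩ := hg.exists_eventually_le_mul_pow
  obtain ⟨b, hb, hf_ge⟩ := hf.exists_eventually_mul_pow_le
  filter_upwards [hg_le, hf_ge, eventually_mul_pow_lt_mul_pow (m * B) hb hku] with n hgn hfn hmn
  have : (m * g n : ℝ) < f n :=
    calc (m * g n : ℝ) ≤ m * B * (n : ℝ) ^ k := by rw [mul_assoc]; gcongr
      _ < b * (n : ℝ) ^ u := hmn
      _ ≤ f n := hfn
  exact_mod_cast this

end IsBigTheta

theorem stmt13_general (u₁ u₂ k₁ k₂ : ℕ) (h₁ : k₁ < u₁) (h₃ : k₂ < k₁)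
    (f₁ f₂ g₁ g₂ : ℕ → ℕ)
    (hf₁ : IsBigTheta f₁ u₁) (hf₂ : IsBigTheta f₂ u₂)
    (hg₁ : IsBigTheta g₁ k₁) (hg₂ : IsBigTheta g₂ k₂) :
    Tendsto (fun n => ((f₂ n).choose (g₂ n) : ℝ) / ((f₁ n).choose (g₁ n) : ℝ))
      atTop (nhds 0) := by
  obtain ⟨δ, hδ, hfg₁⟩ := hf₁.exists_eventually_mul_le hg₁ h₁
  have ht : Tendsto (fun n : ℕ => δ * n) atTop atTop :=
    tendsto_natCast_atTop_atTop.const_mul_atTop hδ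
  refine squeeze_zero' (.of_forall fun n => by positivity) ?_ ht.inv_tendsto_atTop
  filter_upwards [ht.eventually_ge_atTop 1, hfg₁, hf₂.eventually_le_mul_pow_succ hδ,
    hg₂.eventually_mul_lt hg₁ h₃ (u₂ + 1)] with n ht1 hden hnum hexp
  exact choose_div_choose_le_inv ht1 hden hnum hexp

/-- If `u₁ > k₁`, `u₂ > k₂`, `k₁ > k₂`, `f₁ ∈ Θ(n^{u₁})`, `f₂ ∈ Θ(n^{u₂})`,
`g₁ ∈ Θ(n^{k₁})` and `g₂ ∈ Θ(n^{k₂})`, then `C(f₂(n), g₂(n)) ∈ o(C(f₁(n), g₁(n)))`. -/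
theorem stmt13 (u₁ u₂ k₁ k₂ : ℕ) (h₁ : k₁ < u₁) (h₂ : k₂ < u₂) (h₃ : k₂ < k₁)
    (f₁ f₂ g₁ g₂ : ℕ → ℕ)
    (hf₁ : IsBigTheta f₁ u₁) (hf₂ : IsBigTheta f₂ u₂)
    (hg₁ : IsBigTheta g₁ k₁) (hg₂ : IsBigTheta g₂ k₂) :
    Tendsto (fun n => ((f₂ n).choose (g₂ n) : ℝ) / ((f₁ n).choose (g₁ n) : ℝ))
      atTop (nhds 0) :=
  stmt13_general u₁ u₂ k₁ k₂ h₁ h₃ f₁ f₂ g₁ g₂ hf₁ hf₂ hg₁ hg₂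
end
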